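/- Let p be an odd prime, F an algebraically closed field of characteristic p, and l ≥ 4. Let Z := {I, −I}, a central subgroup of SO_J, let H := SO_J/Z with quotient map π, and set T := π(T̄) and W̌ := π(W̄). Then: (1) N_H(T) is the internal semidirect product of T by W̌ (i.e. W̌ ⊆ N_H(T), T ∩ W̌ = {1}, and N_H(T) = T·W̌); (2) the endomorphism of H induced by the entrywise Frobenius map x ↦ (x_{ij}^p) (which preserves SO_J and Z) fixes every element of W̌; (3) conjugation by π(c), where c := P_τ for τ the transposition exchanging l and l+1 (note c ∈ O_J), induces an automorphism of H that maps W̌ onto W̌. -/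

import Mathlib

/-!
The torus `T̄` contains a regular element `diag(d)` with pairwise distinct entries (powers of a
root of unity of order prime to `p`). If `π(g)` normalizes `T`, then `g diag(d) g⁻¹` is `±` a
diagonal matrix, so `g` permutes the eigenlines of `diag(d)` and is monomial: `g = diag(e) P_σ`.
The relation `gᵀ J g = J` then forces `σ ι = ι σ` and `e_i e_{ι i} = 1`; as `ι` has no fixed
points this gives `det diag(e) = 1`, hence `det P_σ = 1` and `g ∈ T̄ W̄`.
Permutation matrices have entries `0` and `1`, so Frobenius fixes them, and `c ∈ V̄` because the
transposition `(l, l+1)` exchanges `l` and `ι l`; conjugation by `V̄` preserves `W̄ = V̄ ∩ SL`.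
-/

open Matrix

noncomputable section

variable (n : ℕ) (F : Type) [Field F]

/-- The antidiagonal matrix `J`: entry `(i,j)` (1-based) is `1` iff `i + j = n + 1`. -/
def Jmat : Matrix (Fin n) (Fin n) F :=
  Matrix.of fun i j => if (i : ℕ) + (j : ℕ) + 1 = n then 1 else 0

/-- The permutation `ι` of `{1,…,n}` given (1-based) by `i ↦ n + 1 - i`. -/
def iotaPerm : Equiv.Perm (Fin n) where
  toFun i := ⟨n - 1 - (i : ℕ), by have := i.isLt; omega⟩
  invFun i := ⟨n - 1 - (i : ℕ), by have := i.isLt; omega⟩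
  left_inv i := by have := i.isLt; apply Fin.ext; show n - 1 - (n - 1 - (i : ℕ)) = _; omega
  right_inv i := by have := i.isLt; apply Fin.ext; show n - 1 - (n - 1 - (i : ℕ)) = _; omega

/-- The permutation matrix `P_σ`, with `(i,j)` entry `1` iff `i = σ j`. -/
def permMat (σ : Equiv.Perm (Fin n)) : Matrix (Fin n) (Fin n) F :=
  Matrix.of fun i j => if i = σ j then 1 else 0

lemma permMat_mul (σ τ : Equiv.Perm (Fin n)) :
    permMat n F σ * permMat n F τ = permMat n F (σ * τ) := by
  ext i j
  simp only [permMat, Matrix.mul_apply, Matrix.of_apply]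
  rw [Finset.sum_eq_single (τ j)]
  · simp [Equiv.Perm.mul_apply]; congr
  · intro k _ hk; simp [hk]
  · intro h; simp at h

lemma permMat_one : permMat n F 1 = 1 := by
  ext i j
  simp [permMat, Matrix.one_apply]; congr

/-- The permutation matrix `P_σ` as an element of `GL_n(F)`. -/
def permGL (σ : Equiv.Perm (Fin n)) : GL (Fin n) F :=
  ⟨permMat n F σ, permMat n F σ⁻¹,
    by rw [permMat_mul]; simp [permMat_one],
    by rw [permMat_mul]; simp [permMat_one]⟩

/-- The orthogonal group `O_J = {x ∈ GL_n(F) : xᵀ J x = J}` as a subgroup of `GL_n(F)`. -/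
def OJ : Subgroup (GL (Fin n) F) where
  carrier := {x | (x : Matrix (Fin n) (Fin n) F)ᵀ * Jmat n F * (x : Matrix (Fin n) (Fin n) F) = Jmat n F}
  one_mem' := by simp
  mul_mem' := by
    intro a b ha hb
    simp only [Set.mem_setOf_eq] at ha hb ⊢
    rw [Units.val_mul, transpose_mul]
    calc (b : Matrix (Fin n) (Fin n) F)ᵀ * (a : Matrix (Fin n) (Fin n) F)ᵀ * Jmat n F *
          ((a : Matrix (Fin n) (Fin n) F) * (b : Matrix (Fin n) (Fin n) F))
        = (b : Matrix (Fin n) (Fin n) F)ᵀ *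
            ((a : Matrix (Fin n) (Fin n) F)ᵀ * Jmat n F * (a : Matrix (Fin n) (Fin n) F)) *
            (b : Matrix (Fin n) (Fin n) F) := by noncomm_ring
      _ = Jmat n F := by rw [ha, hb]
  inv_mem' := by
    intro a ha
    simp only [Set.mem_setOf_eq] at ha ⊢
    calc ((a⁻¹ : GL (Fin n) F) : Matrix (Fin n) (Fin n) F)ᵀ * Jmat n F *
          ((a⁻¹ : GL (Fin n) F) : Matrix (Fin n) (Fin n) F)
        = ((a⁻¹ : GL (Fin n) F) : Matrix (Fin n) (Fin n) F)ᵀ *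
            ((a : Matrix (Fin n) (Fin n) F)ᵀ * Jmat n F * (a : Matrix (Fin n) (Fin n) F)) *
            ((a⁻¹ : GL (Fin n) F) : Matrix (Fin n) (Fin n) F) := by rw [ha]
      _ = ((a : Matrix (Fin n) (Fin n) F) * ((a⁻¹ : GL (Fin n) F) : Matrix (Fin n) (Fin n) F))ᵀ *
            Jmat n F *
            ((a : Matrix (Fin n) (Fin n) F) * ((a⁻¹ : GL (Fin n) F) : Matrix (Fin n) (Fin n) F)) := by
          rw [transpose_mul]; noncomm_ring
      _ = Jmat n F := by rw [Units.mul_inv]; simp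

/-- `SL_n(F)` viewed as a subgroup of `GL_n(F)`. -/
def SLgl : Subgroup (GL (Fin n) F) where
  carrier := {x | (x : Matrix (Fin n) (Fin n) F).det = 1}
  one_mem' := by simp
  mul_mem' := by
    intro a b ha hb
    simp only [Set.mem_setOf_eq] at ha hb ⊢
    rw [Units.val_mul, det_mul, ha, hb, one_mul]
  inv_mem' := by
    intro a ha
    simp only [Set.mem_setOf_eq] at ha ⊢
    have h : ((a : Matrix (Fin n) (Fin n) F) * ((a⁻¹ : GL (Fin n) F) : Matrix (Fin n) (Fin n) F)).det = 1 := by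
      rw [Units.mul_inv]; simp
    rw [det_mul, ha, one_mul] at h
    exact h

/-- `SO_J := O_J ∩ SL_n(F)`. -/
def SOJ : Subgroup (GL (Fin n) F) := OJ n F ⊓ SLgl n F

/-- The diagonal matrices lying in a subgroup `G` of `GL_n(F)` form a subgroup. -/
def diagIn (G : Subgroup (GL (Fin n) F)) : Subgroup (GL (Fin n) F) where
  carrier := {x | x ∈ G ∧ (x : Matrix (Fin n) (Fin n) F).IsDiag}
  one_mem' := ⟨one_mem _, Matrix.isDiag_one⟩
  mul_mem' := by
    rintro a b ⟨haG, haD⟩ ⟨hbG, hbD⟩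
    refine ⟨mul_mem haG hbG, ?_⟩
    rw [Units.val_mul, ← haD.diagonal_diag, ← hbD.diagonal_diag, diagonal_mul_diagonal]
    exact isDiag_diagonal _
  inv_mem' := by
    rintro a ⟨haG, haD⟩
    refine ⟨inv_mem haG, ?_⟩
    rw [Matrix.coe_units_inv, ← haD.diagonal_diag, inv_diagonal]
    exact isDiag_diagonal _

/-- `T̄`, the subgroup of all diagonal matrices contained in `O_J`. -/
def Tbar : Subgroup (GL (Fin n) F) := diagIn n F (OJ n F)

/-- `V̄ = {P_σ : σ ∘ ι = ι ∘ σ}` as a subgroup of `GL_n(F)`. -/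
def Vbar : Subgroup (GL (Fin n) F) where
  carrier := {x | ∃ σ : Equiv.Perm (Fin n),
      σ * iotaPerm n = iotaPerm n * σ ∧ (x : Matrix (Fin n) (Fin n) F) = permMat n F σ}
  one_mem' := ⟨1, by simp, by simp [permMat_one]⟩
  mul_mem' := by
    rintro a b ⟨σ, hσ, ha⟩ ⟨τ, hτ, hb⟩
    refine ⟨σ * τ, ?_, ?_⟩
    · rw [mul_assoc, hτ, ← mul_assoc, hσ, mul_assoc]
    · rw [Units.val_mul, ha, hb, permMat_mul]
  inv_mem' := by
    rintro a ⟨σ, hσ, ha⟩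
    have hau : a = permGL n F σ := Units.ext ha
    exact ⟨σ⁻¹, (Commute.inv_left hσ : _), by rw [hau]; rfl⟩

/-- `W̄ := V̄ ∩ SL_n(F)`. -/
def Wbar : Subgroup (GL (Fin n) F) := Vbar n F ⊓ SLgl n F

end

noncomputable section

variable (n : ℕ) (F : Type) [Field F]

/-- The central subgroup `Z = {I, −I}` of `SO_J`. -/
def Zpm : Subgroup ↥(SOJ n F) where
  carrier := {x | (x : GL (Fin n) F) = 1 ∨ (x : GL (Fin n) F) = -1}
  one_mem' := Or.inl rfl
  mul_mem' := by
    rintro a b (ha | ha) (hb | hb)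
    · left; rw [Subgroup.coe_mul, ha, hb, one_mul]
    · right; rw [Subgroup.coe_mul, ha, hb, one_mul]
    · right; rw [Subgroup.coe_mul, ha, hb, mul_one]
    · left; rw [Subgroup.coe_mul, ha, hb, neg_mul_neg, one_mul]
  inv_mem' := by
    rintro a (ha | ha)
    · left
      have h1 : ((a⁻¹ : ↥(SOJ n F)) : GL (Fin n) F) = (a : GL (Fin n) F)⁻¹ := rfl
      rw [h1, ha, inv_one]
    · right
      have h1 : ((a⁻¹ : ↥(SOJ n F)) : GL (Fin n) F) = (a : GL (Fin n) F)⁻¹ := rfl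
      rw [h1, ha, inv_neg_one]

instance Zpm_normal : (Zpm n F).Normal := by
  constructor
  rintro x (hx | hx) g
  · left; simp [hx]
  · right; simp [hx, mul_neg, neg_mul]

/-- The adjoint group `H := SO_J / {±I}`. -/
def Had : Type := ↥(SOJ n F) ⧸ Zpm n F

instance : Group (Had n F) := inferInstanceAs (Group (↥(SOJ n F) ⧸ Zpm n F))

/-- The quotient map `π : SO_J → H`. -/
def piAd : ↥(SOJ n F) →* Had n F := QuotientGroup.mk' (Zpm n F)

/-- `T := π(T̄)`. -/
def Tad : Subgroup (Had n F) := ((Tbar n F).subgroupOf (SOJ n F)).map (piAd n F)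

/-- `W̌ := π(W̄)`. -/
def Wad : Subgroup (Had n F) := ((Wbar n F).subgroupOf (SOJ n F)).map (piAd n F)

/-- The entrywise Frobenius endomorphism `x ↦ (x_{ij}^p)` of `GL_n(F)`. -/
def frobGL (p : ℕ) [Fact p.Prime] [CharP F p] : GL (Fin n) F →* GL (Fin n) F :=
  Units.map ((frobenius F p).mapMatrix (m := Fin n)).toMonoidHom

end

section Iota

variable {n : ℕ}

theorem iotaPerm_val (i : Fin n) : (iotaPerm n i : ℕ) = n - 1 - i := rfl

theorem iotaPerm_involutive : Function.Involutive (iotaPerm n) := fun i => by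
  ext; simp only [iotaPerm_val]; omega

theorem add_add_one_eq_iff_eq_iotaPerm {i j : Fin n} :
    (i : ℕ) + j + 1 = n ↔ j = iotaPerm n i := by
  rw [Fin.ext_iff, iotaPerm_val]; omega

theorem iotaPerm_ne_self (hn : Even n) (i : Fin n) : iotaPerm n i ≠ i := by
  obtain ⟨k, rfl⟩ := hn
  rw [Ne, Fin.ext_iff, iotaPerm_val]; omega

theorem commute_swap_iotaPerm (i : Fin n) :
    Commute (Equiv.swap i (iotaPerm n i)) (iotaPerm n) := by
  have h := Equiv.swap_apply_apply (iotaPerm n) i (iotaPerm n i)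
  rw [iotaPerm_involutive, Equiv.swap_comm] at h
  exact eq_mul_inv_iff_mul_eq.1 h

theorem prod_eq_one_of_mul_iotaPerm_eq_one {M : Type*} [CommMonoid M] (hn : Even n)
    {d : Fin n → M} (hd : ∀ i, d i * d (iotaPerm n i) = 1) : ∏ i, d i = 1 :=
  Finset.prod_ninvolution _ hd (fun i _ => iotaPerm_ne_self hn i) (fun _ => Finset.mem_univ _)
    iotaPerm_involutive

theorem exists_injective_mul_iotaPerm_eq_one {M : Type*} [CommMonoid M] (hn : Even n)
    {ζ : M} {m : ℕ} (hζ : IsPrimitiveRoot ζ m) (hm : n < m) :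
    ∃ d : Fin n → M, Function.Injective d ∧ ∀ i, d i * d (iotaPerm n i) = 1 := by
  obtain ⟨k, rfl⟩ := hn
  -- exponents `1, …, k` on the first half and `m - k, …, m - 1` on the second,
  -- so that `E i + E (ι i) = m`
  let E : Fin (k + k) → ℕ := fun i => if (i : ℕ) < k then i + 1 else m - (k + k - i)
  have hE : ∀ i, E i < m := fun i => by have := i.isLt; simp only [E]; split <;> omega
  refine ⟨fun i => ζ ^ E i, fun i j hij => ?_, fun i => ?_⟩
  · have hij := hζ.pow_inj (hE i) (hE j) hij
    have := i.isLt; have := j.isLt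
    simp only [E] at hij
    ext; split at hij <;> split at hij <;> omega
  · have hsum : E i + E (iotaPerm (k + k) i) = m := by
      have := i.isLt
      by_cases hi : (i : ℕ) < k <;> by_cases hi' : k + k - 1 - (i : ℕ) < k <;>
        simp only [E, iotaPerm_val, hi, hi', if_true, if_false] <;> omega
    rw [← pow_add, hsum, hζ.pow_eq_one]

end Iota

theorem exists_isPrimitiveRoot_gt (F : Type*) [Field F] [IsSepClosed F] (p : ℕ) [Fact p.Prime]
    [CharP F p] (N : ℕ) : ∃ m, N < m ∧ ∃ ζ : F, IsPrimitiveRoot ζ m := by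
  have : NeZero ((N * p + 1 : ℕ) : F) := ⟨by simp [CharP.cast_eq_zero]⟩
  have := (Fact.out : p.Prime).two_le
  exact ⟨N * p + 1, by nlinarith, HasEnoughRootsOfUnity.exists_primitiveRoot F _⟩

section Matrices

variable {n : ℕ} {F : Type} [Field F]

theorem Jmat_apply (i j : Fin n) : Jmat n F i j = if j = iotaPerm n i then 1 else 0 := by
  simp only [Jmat, of_apply, add_add_one_eq_iff_eq_iotaPerm]

theorem Jmat_map (f : F →+* F) : (Jmat n F).map f = Jmat n F := by
  ext i j; rw [map_apply, Jmat_apply]; split_ifs <;> simp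

theorem permMat_apply (σ : Equiv.Perm (Fin n)) (i j : Fin n) :
    permMat n F σ i j = if i = σ j then 1 else 0 := rfl

theorem permMat_map (f : F →+* F) (σ : Equiv.Perm (Fin n)) :
    (permMat n F σ).map f = permMat n F σ := by
  ext i j; rw [map_apply, permMat_apply]; split_ifs <;> simp

theorem permMat_transpose (σ : Equiv.Perm (Fin n)) :
    (permMat n F σ)ᵀ = permMat n F σ⁻¹ := by
  ext i j
  simp only [transpose_apply, permMat_apply, Equiv.Perm.inv_def, Equiv.eq_symm_apply, eq_comm]

theorem mul_permMat_apply (M : Matrix (Fin n) (Fin n) F) (σ : Equiv.Perm (Fin n)) (i j : Fin n) :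
    (M * permMat n F σ) i j = M i (σ j) := by
  simp [mul_apply, permMat_apply]

theorem permMat_mul_apply (M : Matrix (Fin n) (Fin n) F) (σ : Equiv.Perm (Fin n)) (i j : Fin n) :
    (permMat n F σ * M) i j = M (σ⁻¹ i) j := by
  rw [← transpose_transpose (permMat n F σ), permMat_transpose, ← transpose_transpose M,
    ← transpose_mul, transpose_apply, mul_permMat_apply, transpose_apply, transpose_transpose]

theorem eq_one_of_isDiag_permMat {σ : Equiv.Perm (Fin n)} (h : (permMat n F σ).IsDiag) :
    σ = 1 := by
  refine Equiv.ext fun j => ?_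
  by_contra hj
  simpa [permMat_apply] using h (show σ j ≠ j from hj)

theorem diagonal_mul_permMat_isometry_iff (e : Fin n → F) (σ : Equiv.Perm (Fin n)) :
    (diagonal e * permMat n F σ)ᵀ * Jmat n F * (diagonal e * permMat n F σ) = Jmat n F ↔
      Commute σ (iotaPerm n) ∧ ∀ i, e i * e (iotaPerm n i) = 1 := by
  have entry : ∀ i j, ((diagonal e * permMat n F σ)ᵀ * Jmat n F *
      (diagonal e * permMat n F σ)) i j = e (σ i) * e (σ j) * Jmat n F (σ i) (σ j) := by
    intro i j
    rw [transpose_mul, diagonal_transpose, permMat_transpose, ← Matrix.mul_assoc,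
      mul_permMat_apply, Matrix.mul_assoc, Matrix.mul_assoc, permMat_mul_apply, inv_inv,
      ← Matrix.mul_assoc, mul_diagonal, diagonal_mul]
    ring
  constructor
  · intro h
    have hval : ∀ i, e (σ i) * e (σ (iotaPerm n i)) * Jmat n F (σ i) (σ (iotaPerm n i)) = 1 :=
      fun i => by rw [← entry, h, Jmat_apply, if_pos rfl]
    have hσ : ∀ i, σ (iotaPerm n i) = iotaPerm n (σ i) := fun i => by
      by_contra hne
      simpa [Jmat_apply, hne] using hval i
    refine ⟨Equiv.ext hσ, fun k => ?_⟩
    simpa [hσ, Jmat_apply] using hval (σ⁻¹ k)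
  · rintro ⟨hσ, he⟩
    ext i j
    have hσ' : σ (iotaPerm n i) = iotaPerm n (σ i) := congrArg (· i) hσ
    rw [entry, Jmat_apply, Jmat_apply, ← hσ']
    by_cases hj : j = iotaPerm n i
    · rw [if_pos (congrArg σ hj), if_pos hj, hj, hσ', he, one_mul]
    · rw [if_neg (σ.injective.ne hj), if_neg hj, mul_zero]

end Matrices

section Groups

variable {n : ℕ} {F : Type} [Field F]

theorem mem_OJ_iff (x : GL (Fin n) F) :
    x ∈ OJ n F ↔ (x : Matrix (Fin n) (Fin n) F)ᵀ * Jmat n F * x = Jmat n F := Iff.rfl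

theorem mem_SLgl_iff (x : GL (Fin n) F) :
    x ∈ SLgl n F ↔ (x : Matrix (Fin n) (Fin n) F).det = 1 := Iff.rfl

theorem mem_SOJ_iff (x : GL (Fin n) F) : x ∈ SOJ n F ↔ x ∈ OJ n F ∧ x ∈ SLgl n F :=
  Subgroup.mem_inf

theorem permGL_val (σ : Equiv.Perm (Fin n)) :
    (permGL n F σ : Matrix (Fin n) (Fin n) F) = permMat n F σ := rfl

theorem permGL_inv (σ : Equiv.Perm (Fin n)) : (permGL n F σ)⁻¹ = permGL n F σ⁻¹ := rfl

theorem eq_permGL_of_mem_Vbar {x : GL (Fin n) F} (hx : x ∈ Vbar n F) :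
    ∃ σ, Commute σ (iotaPerm n) ∧ x = permGL n F σ :=
  let ⟨σ, hσ, hx⟩ := hx; ⟨σ, hσ, Units.ext hx⟩

instance SLgl_normal : (SLgl n F).Normal where
  conj_mem g hg c := by
    rw [mem_SLgl_iff] at hg ⊢
    rw [Units.val_mul, Units.val_mul, det_mul, det_mul, hg, mul_one, ← det_mul, ← Units.val_mul,
      mul_inv_cancel, Units.val_one, det_one]

theorem permGL_mem_Vbar {σ : Equiv.Perm (Fin n)} (hσ : Commute σ (iotaPerm n)) :
    permGL n F σ ∈ Vbar n F :=
  ⟨σ, hσ, rfl⟩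

theorem Vbar_le_OJ : Vbar n F ≤ OJ n F := by
  rintro x ⟨σ, hσ, hx⟩
  have h := (diagonal_mul_permMat_isometry_iff (fun _ => 1 : Fin n → F) σ).2
    ⟨hσ, fun _ => one_mul 1⟩
  rwa [diagonal_one, Matrix.one_mul, ← hx] at h

theorem Wbar_le_SOJ : Wbar n F ≤ SOJ n F :=
  inf_le_inf_right _ Vbar_le_OJ

theorem diagonal_isometry_iff (d : Fin n → F) :
    (diagonal d)ᵀ * Jmat n F * diagonal d = Jmat n F ↔ ∀ i, d i * d (iotaPerm n i) = 1 := by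
  simpa [permMat_one] using diagonal_mul_permMat_isometry_iff d 1

theorem Tbar_le_SOJ (hn : Even n) : Tbar n F ≤ SOJ n F := by
  rintro x ⟨hxO, hxD⟩
  refine (mem_SOJ_iff x).2 ⟨hxO, ?_⟩
  rw [mem_OJ_iff, ← hxD.diagonal_diag] at hxO
  rw [mem_SLgl_iff, ← hxD.diagonal_diag, det_diagonal]
  exact prod_eq_one_of_mul_iotaPerm_eq_one hn ((diagonal_isometry_iff _).1 hxO)

theorem exists_mem_Tbar_val_eq_diagonal {d : Fin n → F}
    (hd : ∀ i, d i * d (iotaPerm n i) = 1) :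
    ∃ t ∈ Tbar n F, (t : Matrix (Fin n) (Fin n) F) = diagonal d := by
  have hdet : (diagonal d).det ≠ 0 := by
    rw [det_diagonal]
    exact Finset.prod_ne_zero_iff.2 fun i _ => left_ne_zero_of_mul_eq_one (hd i)
  exact ⟨GeneralLinearGroup.mkOfDetNeZero _ hdet,
    ⟨(diagonal_isometry_iff d).2 hd, isDiag_diagonal d⟩, rfl⟩

theorem conj_mem_Tbar {w t : GL (Fin n) F} (hw : w ∈ Vbar n F) (ht : t ∈ Tbar n F) :
    w * t * w⁻¹ ∈ Tbar n F := by
  refine ⟨mul_mem (mul_mem (Vbar_le_OJ hw) ht.1) (inv_mem (Vbar_le_OJ hw)), fun i j hij => ?_⟩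
  obtain ⟨σ, -, rfl⟩ := eq_permGL_of_mem_Vbar hw
  rw [permGL_inv, Units.val_mul, Units.val_mul, permGL_val, permGL_val, mul_permMat_apply]
  exact (permMat_mul_apply _ σ i _).trans (ht.2 (σ⁻¹.injective.ne hij))

theorem Vbar_le_normalizer_Tbar :
    Vbar n F ≤ Subgroup.normalizer (Tbar n F : Set (GL (Fin n) F)) :=
  Subgroup.le_normalizer_iff.2 fun _ hw _ ht => conj_mem_Tbar hw ht

theorem conj_mem_SOJ {c g : GL (Fin n) F} (hc : c ∈ OJ n F) (hg : g ∈ SOJ n F) :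
    c * g * c⁻¹ ∈ SOJ n F :=
  have hg := (mem_SOJ_iff g).1 hg
  (mem_SOJ_iff _).2 ⟨mul_mem (mul_mem hc hg.1) (inv_mem hc), SLgl_normal.conj_mem _ hg.2 c⟩

theorem conj_mem_Wbar {c g : GL (Fin n) F} (hc : c ∈ Vbar n F) (hg : g ∈ Wbar n F) :
    c * g * c⁻¹ ∈ Wbar n F :=
  have hg := Subgroup.mem_inf.1 hg
  Subgroup.mem_inf.2 ⟨mul_mem (mul_mem hc hg.1) (inv_mem hc), SLgl_normal.conj_mem _ hg.2 c⟩

end Groups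

section Monomial

variable {n : ℕ} {F : Type} [Field F]

theorem exists_eq_diagonal_mul_permMat_of_mul_diagonal_eq {A : Matrix (Fin n) (Fin n) F}
    (hA : A.det ≠ 0) {d d' : Fin n → F} (hd : Function.Injective d)
    (h : A * diagonal d = diagonal d' * A) :
    ∃ (σ : Equiv.Perm (Fin n)) (e : Fin n → F), A = diagonal e * permMat n F σ := by
  have eigen : ∀ i j, A i j ≠ 0 → d j = d' i := fun i j hij =>
    mul_left_cancel₀ hij (by simpa [mul_comm] using congrFun (congrFun h i) j)
  have row : ∀ i, ∃ j, A i j ≠ 0 := fun i => by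
    by_contra! hi
    exact hA (det_eq_zero_of_row_eq_zero i hi)
  choose g hg using row
  have eq_g : ∀ i j, A i j ≠ 0 → j = g i := fun i j hij =>
    hd ((eigen i j hij).trans (eigen i (g i) (hg i)).symm)
  have hsurj : Function.Surjective g := fun j => by
    by_contra! hj
    exact hA (det_eq_zero_of_column_eq_zero j fun i =>
      not_not.1 fun hij => hj i (eq_g i j hij).symm)
  let γ := Equiv.ofBijective g ⟨Finite.injective_iff_surjective.2 hsurj, hsurj⟩
  refine ⟨γ.symm, fun i => A i (g i), ?_⟩
  ext i j
  rw [diagonal_mul, permMat_apply]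
  by_cases hj : i = γ.symm j
  · rw [if_pos hj, mul_one, γ.eq_symm_apply.1 hj |>.symm]; rfl
  · rw [if_neg hj, mul_zero]
    exact not_not.1 fun hij => hj (γ.eq_symm_apply.2 (eq_g i j hij).symm)

theorem exists_mem_Tbar_mem_Wbar_eq_mul (hn : Even n) {g : GL (Fin n) F} (hg : g ∈ SOJ n F)
    {d d' : Fin n → F} (hd : Function.Injective d)
    (hgd : (g : Matrix (Fin n) (Fin n) F) * diagonal d = diagonal d' * g) :
    ∃ t ∈ Tbar n F, ∃ w ∈ Wbar n F, g = t * w := by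
  obtain ⟨hgO, hgS⟩ := (mem_SOJ_iff g).1 hg
  have hdet : (g : Matrix (Fin n) (Fin n) F).det ≠ 0 := by
    rw [(mem_SLgl_iff g).1 hgS]; exact one_ne_zero
  obtain ⟨σ, e, hge⟩ := exists_eq_diagonal_mul_permMat_of_mul_diagonal_eq hdet hd hgd
  obtain ⟨hσ, -⟩ := (diagonal_mul_permMat_isometry_iff e σ).1 (hge ▸ hgO)
  have hw := permGL_mem_Vbar (F := F) hσ
  have ht : g * (permGL n F σ)⁻¹ ∈ Tbar n F := by
    refine ⟨mul_mem hgO (inv_mem (Vbar_le_OJ hw)), ?_⟩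
    rw [permGL_inv, Units.val_mul, hge, permGL_val, Matrix.mul_assoc, permMat_mul,
      mul_inv_cancel, permMat_one, Matrix.mul_one]
    exact isDiag_diagonal e
  have hwS : permGL n F σ ∈ SLgl n F := by
    simpa using mul_mem (inv_mem ((mem_SOJ_iff _).1 (Tbar_le_SOJ hn ht)).2) hgS
  exact ⟨_, ht, _, Subgroup.mem_inf.2 ⟨hw, hwS⟩, by group⟩

end Monomial

section Adjoint

variable {n : ℕ} {F : Type} [Field F]

theorem piAd_eq_piAd_iff {x y : SOJ n F} :
    piAd n F x = piAd n F y ↔ ∃ z ∈ Zpm n F, x * z = y :=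
  QuotientGroup.mk'_eq_mk' _

theorem isDiag_of_piAd_mem_Tad {y : SOJ n F} (hy : piAd n F y ∈ Tad n F) :
    ((y : GL (Fin n) F) : Matrix (Fin n) (Fin n) F).IsDiag := by
  obtain ⟨s, hs, hsy⟩ := Subgroup.mem_map.1 hy
  obtain ⟨z, hz | hz, rfl⟩ := piAd_eq_piAd_iff.1 hsy
  · simpa [hz] using hs.2
  · simpa [hz] using hs.2.neg

theorem Wad_le_normalizer_Tad :
    Wad n F ≤ Subgroup.normalizer (Tad n F : Set (Had n F)) := by
  have hW : (Wbar n F).subgroupOf (SOJ n F) ≤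
      Subgroup.normalizer ((Tbar n F).subgroupOf (SOJ n F) : Set (SOJ n F)) :=
    (Subgroup.subgroupOf_mono _ (inf_le_left.trans Vbar_le_normalizer_Tbar)).trans
      (Subgroup.le_normalizer_comap _)
  exact (Subgroup.map_mono hW).trans (Subgroup.le_normalizer_map _)

theorem Tad_inf_Wad_eq_bot : Tad n F ⊓ Wad n F = ⊥ := by
  refine eq_bot_iff.2 fun x ⟨hxT, hxW⟩ => ?_
  obtain ⟨w, hw, rfl⟩ := Subgroup.mem_map.1 hxW
  rw [Subgroup.mem_subgroupOf] at hw
  obtain ⟨σ, -, hσ⟩ := (Subgroup.mem_inf.1 hw).1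
  have hdiag := isDiag_of_piAd_mem_Tad hxT
  rw [hσ] at hdiag
  have : w = 1 := Subtype.ext (Units.ext (by
    rw [hσ, eq_one_of_isDiag_permMat hdiag, permMat_one]; rfl))
  rw [this, map_one]
  exact one_mem _

theorem exists_mem_Tad_mem_Wad_eq_mul_of_mem_normalizer (hn : Even n) {d : Fin n → F}
    (hd : Function.Injective d) (hbal : ∀ i, d i * d (iotaPerm n i) = 1) {x : Had n F}
    (hx : x ∈ Subgroup.normalizer (Tad n F : Set (Had n F))) :
    ∃ t ∈ Tad n F, ∃ w ∈ Wad n F, x = t * w := by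
  obtain ⟨g, rfl⟩ : ∃ g, piAd n F g = x := QuotientGroup.mk'_surjective _ x
  obtain ⟨t₀, ht₀, ht₀d⟩ := exists_mem_Tbar_val_eq_diagonal hbal
  let t : SOJ n F := ⟨t₀, Tbar_le_SOJ hn ht₀⟩
  have hconj : piAd n F (g * t * g⁻¹) ∈ Tad n F := by
    rw [map_mul, map_mul, map_inv]
    exact (Subgroup.mem_normalizer_iff.1 hx _).1 ⟨t, ht₀, rfl⟩
  have hgt : ((g : GL (Fin n) F) : Matrix (Fin n) (Fin n) F) * diagonal d =
      diagonal (((g * t * g⁻¹ : SOJ n F) : GL (Fin n) F) : Matrix (Fin n) (Fin n) F).diag *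
        (g : GL (Fin n) F) := by
    rw [(isDiag_of_piAd_mem_Tad hconj).diagonal_diag, ← ht₀d, ← Units.val_mul,
      ← Units.val_mul]
    congr 1
    push_cast
    group
    rfl
  obtain ⟨t', ht', w', hw', hg⟩ := exists_mem_Tbar_mem_Wbar_eq_mul hn g.2 hd hgt
  refine ⟨piAd n F ⟨t', Tbar_le_SOJ hn ht'⟩, Subgroup.mem_map_of_mem _ ht',
    piAd n F ⟨w', Wbar_le_SOJ hw'⟩, Subgroup.mem_map_of_mem _ hw', ?_⟩
  rw [← map_mul]
  exact congrArg (piAd n F) (Subtype.ext hg)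

theorem map_mem_Zpm {φ : GL (Fin n) F →* GL (Fin n) F} (hφ : φ (-1) = -1) {z : SOJ n F}
    (hz : z ∈ Zpm n F) (h : φ z ∈ SOJ n F) : (⟨φ z, h⟩ : SOJ n F) ∈ Zpm n F := by
  rcases hz with hz | hz
  · exact Or.inl (by simp [hz])
  · exact Or.inr (by simp [hz, hφ])

theorem exists_conj_mem_Wad {c : GL (Fin n) F} (hc : c ∈ Vbar n F) (g : SOJ n F)
    (hg : g ∈ (Wbar n F).subgroupOf (SOJ n F)) :
    ∃ h : c * g * c⁻¹ ∈ SOJ n F, piAd n F ⟨_, h⟩ ∈ Wad n F :=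
  have hW := conj_mem_Wbar hc hg
  ⟨Wbar_le_SOJ hW, _, hW, rfl⟩

theorem exists_conj_eq_of_mem_Wad {c : GL (Fin n) F} (hc : c ∈ Vbar n F) {w : Had n F}
    (hw : w ∈ Wad n F) :
    ∃ g : SOJ n F, g ∈ (Wbar n F).subgroupOf (SOJ n F) ∧
      ∃ h : c * g * c⁻¹ ∈ SOJ n F, piAd n F ⟨_, h⟩ = w := by
  obtain ⟨g₀, hg₀, rfl⟩ := Subgroup.mem_map.1 hw
  have hW := conj_mem_Wbar (inv_mem hc) hg₀
  have hconj : c * (c⁻¹ * g₀ * c⁻¹⁻¹) * c⁻¹ = g₀ := by group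
  exact ⟨⟨_, Wbar_le_SOJ hW⟩, hW, hconj ▸ g₀.2, congrArg (piAd n F) (Subtype.ext hconj)⟩

end Adjoint

section Frobenius

variable {n : ℕ} {F : Type} [Field F] (p : ℕ) [Fact p.Prime] [CharP F p]

theorem frobGL_val (g : GL (Fin n) F) :
    (frobGL n F p g : Matrix (Fin n) (Fin n) F) =
      (g : Matrix (Fin n) (Fin n) F).map (frobenius F p) :=
  rfl

theorem frobGL_neg_one : frobGL n F p (-1) = -1 :=
  Units.ext (by
    rw [frobGL_val, Units.val_neg, Units.val_one, ← RingHom.mapMatrix_apply, map_neg, map_one])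

theorem frobGL_mem_SOJ {g : GL (Fin n) F} (hg : g ∈ SOJ n F) : frobGL n F p g ∈ SOJ n F := by
  obtain ⟨hgO, hgS⟩ := (mem_SOJ_iff g).1 hg
  refine (mem_SOJ_iff _).2 ⟨?_, ?_⟩
  · rw [mem_OJ_iff, frobGL_val, ← transpose_map, ← Jmat_map (frobenius F p),
      ← Matrix.map_mul, ← Matrix.map_mul, (mem_OJ_iff g).1 hgO]
  · rw [mem_SLgl_iff, frobGL_val, ← RingHom.mapMatrix_apply, ← RingHom.map_det,
      (mem_SLgl_iff g).1 hgS, map_one]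

theorem frobGL_eq_self_of_mem_Vbar {x : GL (Fin n) F} (hx : x ∈ Vbar n F) :
    frobGL n F p x = x := by
  obtain ⟨σ, -, rfl⟩ := eq_permGL_of_mem_Vbar hx
  exact Units.ext (permMat_map _ σ)

theorem exists_piAd_frobGL_eq (g : SOJ n F) (hg : g ∈ (Wbar n F).subgroupOf (SOJ n F)) :
    ∃ h : frobGL n F p g ∈ SOJ n F, piAd n F ⟨frobGL n F p g, h⟩ = piAd n F g :=
  have hfix := frobGL_eq_self_of_mem_Vbar p (Subgroup.mem_inf.1 hg).1
  ⟨hfix ▸ g.2, congrArg (piAd n F) (Subtype.ext hfix)⟩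

end Frobenius

/-- For `p` an odd prime, `F` algebraically closed of characteristic `p`,
`l ≥ 4`, `H := SO_J/{±I}`, `T := π(T̄)` and `W̌ := π(W̄)`:
(1) `N_H(T)` is the internal semidirect product of `T` by `W̌`;
(2) the entrywise Frobenius preserves `SO_J` and `Z = {±I}` and the induced endomorphism of `H`
fixes every element of `W̌`;
(3) with `c` the permutation matrix of the transposition `(l, l+1)`, one has `c ∈ O_J`,
conjugation by `c` preserves `SO_J` and `Z`, and the induced automorphism of `H`
maps `W̌` onto `W̌`. -/
theorem adjoint_normalizer_semidirect_frobenius_and_graph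
    (p : ℕ) [Fact p.Prime]
    (F : Type) [Field F] [IsAlgClosed F] [CharP F p]
    (l : ℕ) (hl : 4 ≤ l) :
    -- (1)
    (Wad (2 * l) F ≤ Subgroup.normalizer (Tad (2 * l) F : Set (Had (2 * l) F)) ∧
      Tad (2 * l) F ⊓ Wad (2 * l) F = ⊥ ∧
      ∀ x ∈ Subgroup.normalizer (Tad (2 * l) F : Set (Had (2 * l) F)),
        ∃ t ∈ Tad (2 * l) F, ∃ w ∈ Wad (2 * l) F, x = t * w) ∧
    -- (2)
    ((∀ g : GL (Fin (2 * l)) F, g ∈ SOJ (2 * l) F → frobGL (2 * l) F p g ∈ SOJ (2 * l) F) ∧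
      (∀ z : ↥(SOJ (2 * l) F), z ∈ Zpm (2 * l) F →
        ∀ h : frobGL (2 * l) F p (z : GL (Fin (2 * l)) F) ∈ SOJ (2 * l) F,
          (⟨frobGL (2 * l) F p (z : GL (Fin (2 * l)) F), h⟩ : ↥(SOJ (2 * l) F)) ∈ Zpm (2 * l) F) ∧
      (∀ g : ↥(SOJ (2 * l) F), g ∈ (Wbar (2 * l) F).subgroupOf (SOJ (2 * l) F) →
        ∃ h : frobGL (2 * l) F p (g : GL (Fin (2 * l)) F) ∈ SOJ (2 * l) F,
          piAd (2 * l) F (⟨frobGL (2 * l) F p (g : GL (Fin (2 * l)) F), h⟩ : ↥(SOJ (2 * l) F)) =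
            piAd (2 * l) F g)) ∧
    -- (3)
    (permGL (2 * l) F (Equiv.swap (⟨l - 1, by omega⟩ : Fin (2 * l)) ⟨l, by omega⟩) ∈ OJ (2 * l) F ∧
      (∀ g : GL (Fin (2 * l)) F, g ∈ SOJ (2 * l) F →
        permGL (2 * l) F (Equiv.swap (⟨l - 1, by omega⟩ : Fin (2 * l)) ⟨l, by omega⟩) * g *
          (permGL (2 * l) F (Equiv.swap (⟨l - 1, by omega⟩ : Fin (2 * l)) ⟨l, by omega⟩))⁻¹ ∈
          SOJ (2 * l) F) ∧
      (∀ z : ↥(SOJ (2 * l) F), z ∈ Zpm (2 * l) F →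
        ∀ h : permGL (2 * l) F (Equiv.swap (⟨l - 1, by omega⟩ : Fin (2 * l)) ⟨l, by omega⟩) *
            (z : GL (Fin (2 * l)) F) *
            (permGL (2 * l) F (Equiv.swap (⟨l - 1, by omega⟩ : Fin (2 * l)) ⟨l, by omega⟩))⁻¹ ∈
            SOJ (2 * l) F,
          (⟨_, h⟩ : ↥(SOJ (2 * l) F)) ∈ Zpm (2 * l) F) ∧
      (∀ g : ↥(SOJ (2 * l) F), g ∈ (Wbar (2 * l) F).subgroupOf (SOJ (2 * l) F) →
        ∃ h : permGL (2 * l) F (Equiv.swap (⟨l - 1, by omega⟩ : Fin (2 * l)) ⟨l, by omega⟩) *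
            (g : GL (Fin (2 * l)) F) *
            (permGL (2 * l) F (Equiv.swap (⟨l - 1, by omega⟩ : Fin (2 * l)) ⟨l, by omega⟩))⁻¹ ∈
            SOJ (2 * l) F,
          piAd (2 * l) F (⟨_, h⟩ : ↥(SOJ (2 * l) F)) ∈ Wad (2 * l) F) ∧
      (∀ w ∈ Wad (2 * l) F, ∃ g : ↥(SOJ (2 * l) F),
        g ∈ (Wbar (2 * l) F).subgroupOf (SOJ (2 * l) F) ∧
        ∃ h : permGL (2 * l) F (Equiv.swap (⟨l - 1, by omega⟩ : Fin (2 * l)) ⟨l, by omega⟩) *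
            (g : GL (Fin (2 * l)) F) *
            (permGL (2 * l) F (Equiv.swap (⟨l - 1, by omega⟩ : Fin (2 * l)) ⟨l, by omega⟩))⁻¹ ∈
            SOJ (2 * l) F,
          piAd (2 * l) F (⟨_, h⟩ : ↥(SOJ (2 * l) F)) = w)) := by
  have hn : Even (2 * l) := even_two_mul l
  obtain ⟨m, hm, ζ, hζ⟩ := exists_isPrimitiveRoot_gt F p (2 * l)
  obtain ⟨d, hd, hbal⟩ := exists_injective_mul_iotaPerm_eq_one hn hζ hm
  have hswap : (⟨l, by omega⟩ : Fin (2 * l)) = iotaPerm (2 * l) ⟨l - 1, by omega⟩ := by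
    ext; simp only [iotaPerm_val]; omega
  have hcV := permGL_mem_Vbar (F := F) (hswap ▸ commute_swap_iotaPerm ⟨l - 1, by omega⟩)
  refine ⟨⟨Wad_le_normalizer_Tad, Tad_inf_Wad_eq_bot,
      fun x hx => exists_mem_Tad_mem_Wad_eq_mul_of_mem_normalizer hn hd hbal hx⟩,
    ⟨fun g hg => frobGL_mem_SOJ p hg, fun z hz h => map_mem_Zpm (frobGL_neg_one p) hz h,
      exists_piAd_frobGL_eq p⟩,
    ⟨Vbar_le_OJ hcV, fun g hg => conj_mem_SOJ (Vbar_le_OJ hcV) hg,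
      fun z hz h => map_mem_Zpm (φ := (MulAut.conj _).toMonoidHom) (by simp) hz h,
      exists_conj_mem_Wad hcV, fun w hw => exists_conj_eq_of_mem_Wad hcV hw⟩⟩
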